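/- For every non-vertex point p of the weighted projective plane P(1,1,2), the set of forms f ∈ W such that the coefficient of z³ in f vanishes (i.e. the curve f = 0 passes through the vertex) and f is singular at p is a complex linear subspace of W of dimension 12 (codimension 4). -/

import Mathlib

open MvPolynomial

noncomputable section

/-- The polynomial ring `ℂ[x, y, z]`, with variables indexed by `Fin 3`:
`x = X 0`, `y = X 1`, `z = X 2`. -/
abbrev P3 : Type := MvPolynomial (Fin 3) ℂ

/-- The weights `wt(x) = wt(y) = 1`, `wt(z) = 2`. -/
def w112 : Fin 3 → ℕ := ![1, 1, 2]

/-- The space `W` of weighted homogeneous polynomials of weighted degree `6`. -/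
def W6 : Submodule ℂ P3 := weightedHomogeneousSubmodule ℂ w112 6

/-- A form `f` is singular at the point of the cone `P(1,1,2)` with representative `p ∈ ℂ³`
if the three partial derivatives of `f` all vanish at `p`. -/
def SingAt (f : P3) (p : Fin 3 → ℂ) : Prop :=
  ∀ i : Fin 3, eval p (pderiv i f) = 0

/-!
The subspace is the kernel, inside the 16-dimensional space `W`, of the linear map
`f ↦ (coefficient of z³, ∇f(p)) ∈ ℂ × ℂ³`, so it suffices that this map is onto `ℂ⁴`.
Since `(p₀, p₁) ≠ 0` there is a linear form `ℓ = a x + b y` with `ℓ(p) = 1`; put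
`μ = p₁ x - p₀ y`, so `μ(p) = 0`. The forms `z³, ℓ⁶, μ ℓ⁵, ℓ⁴ z` lie in `W`, and their images
`(1, 0, 0, 3p₂²)`, `(0, 6a, 6b, 0)`, `(0, p₁, -p₀, 0)`, `(0, 4ap₂, 4bp₂, 1)` span `ℂ⁴`: the middle
`2 × 2` block has determinant `-6 (a p₀ + b p₁) = -6`. On `W`, the coefficient of `z³` is the
value at the vertex `(0, 0, 1)`, which is how it is computed on these forms.
-/

open Module

theorem Submodule.finrank_inf_ker_add_finrank {K V V' : Type*} [DivisionRing K]
    [AddCommGroup V] [Module K V] [AddCommGroup V'] [Module K V']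
    (U : Submodule K V) [FiniteDimensional K U] (φ : V →ₗ[K] V') (hφ : U.map φ = ⊤) :
    finrank K ↥(U ⊓ LinearMap.ker φ) + finrank K V' = finrank K U := by
  have h := (φ.domRestrict U).finrank_range_add_finrank_ker
  rwa [LinearMap.range_domRestrict, hφ, finrank_top, LinearMap.ker_domRestrict,
    ← Submodule.finrank_map_subtype_eq, Submodule.map_comap_subtype, add_comm] at h

theorem MvPolynomial.IsWeightedHomogeneous.eval_single_one_eq_coeff {R σ : Type*}
    [CommSemiring R] [DecidableEq σ] {w : σ → ℕ} {f : MvPolynomial σ R} {i : σ} {k : ℕ}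
    (hf : IsWeightedHomogeneous w f (w i * k)) (hi : w i ≠ 0) :
    eval (Pi.single i 1) f = coeff (Finsupp.single i k) f := by
  rw [eval_eq, Finset.sum_eq_single (Finsupp.single i k)]
  · rw [Finset.prod_eq_one, mul_one]
    intro j hj
    rw [Finset.mem_singleton.mp (Finsupp.support_single_subset hj), Pi.single_eq_same, one_pow]
  · intro d hd hdk
    obtain ⟨j, hj, hji⟩ : ∃ j ∈ d.support, j ≠ i := by
      by_contra! h
      have hd_single := Finsupp.support_subset_singleton.mp fun j hj =>
        Finset.mem_singleton.mpr (h j hj)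
      have hw := hf (mem_support_iff.mp hd)
      rw [hd_single, Finsupp.weight_single, smul_eq_mul, mul_comm,
        Nat.mul_left_cancel_iff (Nat.pos_of_ne_zero hi)] at hw
      exact hdk (hw ▸ hd_single)
    have hj_factor : (Pi.single i 1 : σ → R) j ^ d j = 0 := by
      rw [Pi.single_eq_of_ne hji, zero_pow (Finsupp.mem_support_iff.mp hj)]
    rw [Finset.prod_eq_zero hj hj_factor, mul_zero]
  · intro h
    rw [notMem_support_iff.mp h, zero_mul]

lemma weight_w112 (d : Fin 3 →₀ ℕ) : Finsupp.weight w112 d = d 0 + d 1 + 2 * d 2 := by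
  simp [Finsupp.weight_apply, Finsupp.sum_fintype, w112, Fin.sum_univ_three, mul_comm]

lemma natCard_weight_w112_eq_six :
    Nat.card {d : Fin 3 →₀ ℕ // Finsupp.weight w112 d = 6} = 16 := by
  let s := (Fintype.piFinset fun _ : Fin 3 => Finset.range 7).filter
    fun v => v 0 + v 1 + 2 * v 2 = 6
  let e : {d : Fin 3 →₀ ℕ // Finsupp.weight w112 d = 6} ≃ s :=
    Finsupp.equivFunOnFinite.subtypeEquiv fun d => by
      simp only [s, weight_w112, Finset.mem_filter, Fintype.mem_piFinset, Fin.forall_fin_succ,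
        Finsupp.equivFunOnFinite_apply, Finset.mem_range, IsEmpty.forall_iff, and_true,
        Fin.succ_zero_eq_one, Fin.succ_one_eq_two]
      omega
  rw [Nat.card_congr e, Nat.card_eq_finsetCard]
  decide

lemma finrank_W6 : finrank ℂ W6 = 16 := by
  have hW6 : W6 = restrictSupport ℂ {d | Finsupp.weight w112 d = 6} :=
    weightedHomogeneousSubmodule_eq_finsupp_supported ℂ w112 6
  rw [hW6, finrank_eq_nat_card_basis (basisRestrictSupport ℂ _)]
  exact natCard_weight_w112_eq_six

instance : FiniteDimensional ℂ W6 :=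
  Module.finite_of_finrank_pos (by rw [finrank_W6]; norm_num)

def coeffVertexGradient (q : Fin 3 → ℂ) : P3 →ₗ[ℂ] ℂ × (Fin 3 → ℂ) :=
  (lcoeff ℂ (Finsupp.single 2 3)).prod
    (LinearMap.pi fun i => (aeval q).toLinearMap ∘ₗ (pderiv (R := ℂ) i).toLinearMap)

lemma mem_ker_coeffVertexGradient {q : Fin 3 → ℂ} {f : P3} :
    f ∈ LinearMap.ker (coeffVertexGradient q) ↔
      coeff (Finsupp.single 2 3) f = 0 ∧ SingAt f q := by
  simp [coeffVertexGradient, SingAt, funext_iff]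

lemma map_coeffVertexGradient_W6 {q : Fin 3 → ℂ} (hq : IsCoprime (q 0) (q 1)) :
    W6.map (coeffVertexGradient q) = ⊤ := by
  rw [Submodule.eq_top_iff']
  rintro ⟨c, v⟩
  obtain ⟨a, b, hab⟩ := hq
  set ℓ : P3 := C a * X 0 + C b * X 1
  set μ : P3 := C (q 1) * X 0 - C (q 0) * X 1
  set δ := v 2 - 3 * q 2 ^ 2 * c with hδ
  set r₀ := v 0 - 4 * a * q 2 * δ with hr₀
  set r₁ := v 1 - 4 * b * q 2 * δ with hr₁
  set f : P3 := C c * X 2 ^ 3 + C ((q 0 * r₀ + q 1 * r₁) / 6) * ℓ ^ 6 +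
    C (b * r₀ - a * r₁) * μ * ℓ ^ 5 + C δ * ℓ ^ 4 * X 2
  have hX (i : Fin 3) : IsWeightedHomogeneous w112 (X i : P3) (w112 i) :=
    isWeightedHomogeneous_X ℂ w112 i
  have hℓ : IsWeightedHomogeneous w112 ℓ 1 := ((hX 0).C_mul a).add ((hX 1).C_mul b)
  have hμ : IsWeightedHomogeneous w112 μ 1 := ((hX 0).C_mul _).sub ((hX 1).C_mul _)
  have hf : IsWeightedHomogeneous w112 f (w112 2 * 3) :=
    (((((hX 2).pow 3).C_mul c).add ((hℓ.pow 6).C_mul _)).add ((hμ.C_mul _).mul (hℓ.pow 5))).add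
      (((hℓ.pow 4).C_mul δ).mul (hX 2))
  refine ⟨f, hf, Prod.ext ?_ (funext fun i => ?_)⟩
  · change coeff (Finsupp.single 2 3) f = c
    rw [← hf.eval_single_one_eq_coeff (by decide)]
    simp [f, ℓ, μ]
  · fin_cases i <;>
      simp [coeffVertexGradient, f, ℓ, μ, Derivation.leibniz_pow, Derivation.leibniz, hab]
    · linear_combination r₀ * hab + hr₀
    · linear_combination r₁ * hab + hr₁
    · linear_combination hδ

/-- For every non-vertex point `p` of `P(1,1,2)`, the set of forms `f ∈ W` whose coefficient of
`z³` vanishes (i.e. the curve `f = 0` passes through the vertex) and which are singular at `p`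
is a complex linear subspace of `W` of dimension `12` (codimension 4). -/
theorem cone_through_vertex_and_singular_at_point_codim_four
    (p : Fin 3 → ℂ) (hp : ¬(p 0 = 0 ∧ p 1 = 0)) :
    ∃ S : Submodule ℂ P3,
      (S : Set P3) = {f : P3 | f ∈ W6 ∧ coeff (Finsupp.single 2 3) f = 0 ∧ SingAt f p} ∧
      Module.finrank ℂ S = 12 := by
  refine ⟨W6 ⊓ LinearMap.ker (coeffVertexGradient p), ?_, ?_⟩
  · ext f
    exact and_congr_right' mem_ker_coeffVertexGradient
  · have hp' : IsCoprime (p 0) (p 1) := Semifield.isCoprime_iff.mpr (not_and_or.mp hp)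
    have h := W6.finrank_inf_ker_add_finrank _ (map_coeffVertexGradient_W6 hp')
    rw [finrank_W6, finrank_prod, finrank_self, finrank_fin_fun] at h
    omega

end
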